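/- Let f : X → Y be an irreducible morphism in C_I(P) between minimal projective complexes. Then exactly one of the following three conditions holds: (a) f is smonic; (b) f is sepic; (c) f is sirreducible. -/

import Mathlib

/-!
Test an irreducible chain map `f : X ⟶ Y` against spliced complexes: given `α : X^i → W`,
`β : W → Y^i` with `W` finitely generated projective, the complex equal to `X` below degree `i`,
to `W` in degree `i` and to `Y` above it (differentials `α ∘ d_X` and `d_Y ∘ β` at `W`) is again
minimal, and `f` factors through it as `(1, α, f)` followed by `(f, β, 1)`. So when `f^i = β ∘ α`,
either `α` is split mono (and so is `f^j` for `j > i`) or `β` is split epi (and so is `f^j` for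
`j < i`). This makes a component that is neither split mono nor split epi irreducible, and, with
`W = X^i`, it shows that for every `i` either `f^j` is split epi for all `j ≤ i` or split mono for
all `j > i`. The only remaining configuration, `f^i` split epi but not split mono followed by
split monos, is excluded by splicing `Y` below and `X` above degree `i`, connected by `d_X ∘ s`
for a section `s` of `f^i`; this is a complex because `f^{i+1}` is mono. Finally, `f` cannot be
both smonic and sepic, for then it would be an isomorphism.
-/

open CategoryTheory CategoryTheory.Limits

namespace ARShapes

variable {Λ : Type} [Ring Λ]

/-- Cochain complexes of (right) `Λ`-modules, i.e. `Λᵐᵒᵖ`-modules, indexed by `ℤ`. -/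
abbrev Cplx (Λ : Type) [Ring Λ] : Type 1 := CochainComplex (ModuleCat Λᵐᵒᵖ) ℤ

/-- A minimal projective complex: a complex of finitely generated projective right
`Λ`-modules whose differentials have image contained in the radical of the target. -/
def IsMinimalProjective (X : Cplx Λ) : Prop :=
  (∀ i : ℤ, Module.Finite Λᵐᵒᵖ (X.X i)) ∧ (∀ i : ℤ, Module.Projective Λᵐᵒᵖ (X.X i)) ∧
    (∀ i : ℤ, LinearMap.range (X.d i (i + 1)).hom ≤
      (Ideal.jacobson (⊥ : Ideal Λᵐᵒᵖ)) • (⊤ : Submodule Λᵐᵒᵖ (X.X (i + 1))))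

/-- Irreducibility of a morphism in the category `P` of finitely generated projective
right `Λ`-modules (a full subcategory of all modules). -/
def IrreducibleP {M N : ModuleCat Λᵐᵒᵖ} (φ : M ⟶ N) : Prop :=
  ¬ IsSplitMono φ ∧ ¬ IsSplitEpi φ ∧
    ∀ (Z : ModuleCat Λᵐᵒᵖ), Module.Finite Λᵐᵒᵖ Z → Module.Projective Λᵐᵒᵖ Z →
      ∀ (g : M ⟶ Z) (h : Z ⟶ N), φ = g ≫ h → IsSplitMono g ∨ IsSplitEpi h

/-- A chain map is smonic if all of its components are split monomorphisms. -/
def Smonic {X Y : Cplx Λ} (f : X ⟶ Y) : Prop := ∀ i : ℤ, IsSplitMono (f.f i)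

/-- A chain map is sepic if all of its components are split epimorphisms. -/
def Sepic {X Y : Cplx Λ} (f : X ⟶ Y) : Prop := ∀ i : ℤ, IsSplitEpi (f.f i)

/-- A chain map is sirreducible if there is exactly one index `i₀` where the component is
irreducible in the category of finitely generated projective modules, the components in lower
degrees being split epimorphisms and those in higher degrees split monomorphisms.  (Since an
irreducible morphism is neither a split monomorphism nor a split epimorphism, the uniqueness
of such an index is automatic.) -/
def Sirreducible {X Y : Cplx Λ} (f : X ⟶ Y) : Prop :=
  ∃ i₀ : ℤ, IrreducibleP (f.f i₀) ∧ (∀ i : ℤ, i < i₀ → IsSplitEpi (f.f i)) ∧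
    (∀ i : ℤ, i₀ < i → IsSplitMono (f.f i))

/-- Irreducibility of a chain map in the category `C_I(P)` of minimal projective
complexes (a full subcategory of all complexes). -/
def IrreducibleC {X Y : Cplx Λ} (f : X ⟶ Y) : Prop :=
  ¬ IsSplitMono f ∧ ¬ IsSplitEpi f ∧
    ∀ (Z : Cplx Λ), IsMinimalProjective Z →
      ∀ (g : X ⟶ Z) (h : Z ⟶ Y), f = g ≫ h → IsSplitMono g ∨ IsSplitEpi h

lemma isSplitMono_of_isSplitMono_comp {C : Type*} [Category C] {X Y Z : C} {f : X ⟶ Y}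
    {g : Y ⟶ Z} (h : IsSplitMono (f ≫ g)) : IsSplitMono f :=
  .mk' ⟨g ≫ retraction (f ≫ g), by rw [← Category.assoc, IsSplitMono.id]⟩

lemma isSplitEpi_of_isSplitEpi_comp {C : Type*} [Category C] {X Y Z : C} {f : X ⟶ Y}
    {g : Y ⟶ Z} (h : IsSplitEpi (f ≫ g)) : IsSplitEpi g :=
  .mk' ⟨section_ (f ≫ g) ≫ f, by rw [Category.assoc, IsSplitEpi.id]⟩

lemma isSplitMono_f {V : Type*} [Category V] [HasZeroMorphisms V] {ι : Type*} {c : ComplexShape ι}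
    {X Y : HomologicalComplex V c} {g : X ⟶ Y} (h : IsSplitMono g) (j : ι) :
    IsSplitMono (g.f j) :=
  inferInstanceAs (IsSplitMono ((HomologicalComplex.eval V c j).map g))

lemma isSplitEpi_f {V : Type*} [Category V] [HasZeroMorphisms V] {ι : Type*} {c : ComplexShape ι}
    {X Y : HomologicalComplex V c} {g : X ⟶ Y} (h : IsSplitEpi g) (j : ι) :
    IsSplitEpi (g.f j) :=
  inferInstanceAs (IsSplitEpi ((HomologicalComplex.eval V c j).map g))

lemma exists_pivot {P Q : ℤ → Prop} (hsplit : ∀ i, (∀ j ≤ i, Q j) ∨ ∀ j, i < j → P j)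
    (hstep : ∀ i, Q i → P (i + 1) → P i ∨ ∀ j, i < j → Q j)
    (hP : ¬ ∀ j, P j) (hQ : ¬ ∀ j, Q j) :
    ∃ i, ¬ P i ∧ ¬ Q i ∧ (∀ j < i, Q j) ∧ ∀ j, i < j → P j := by
  push Not at hP hQ
  obtain ⟨b, hb⟩ := hQ
  have hbdd : ∀ j, ¬ P j → j ≤ b := fun j hj => by
    by_contra hbj
    rcases hsplit b with h | h
    · exact hb (h b le_rfl)
    · exact hj (h j (by omega))
  obtain ⟨i, hi, hmax⟩ := Int.exists_greatest_of_bdd ⟨b, hbdd⟩ hP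
  have habove : ∀ j, i < j → P j := fun j hj => by
    by_contra h
    exact (hmax j h).not_gt hj
  have hbelow : ∀ j < i, Q j := by
    rcases hsplit (i - 1) with h | h
    · exact fun j hj => h j (by omega)
    · exact absurd (h i (by omega)) hi
  refine ⟨i, hi, fun hQi => ?_, hbelow, habove⟩
  rcases hstep i hQi (habove _ (lt_add_one i)) with h | h
  · exact hi h
  · rcases lt_trichotomy b i with hbi | rfl | hbi
    exacts [hb (hbelow b hbi), hb hQi, hb (h b hbi)]

section Splice

variable {V : Type*} [Category V] [HasZeroMorphisms V] (A B : CochainComplex V ℤ) (i : ℤ)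

def spliceX (W : V) (j : ℤ) : V := if j < i then A.X j else if j = i then W else B.X j

variable {W : V}

variable {A B i} in
lemma spliceX_of_lt {j : ℤ} (h : j < i) : spliceX A B i W j = A.X j := if_pos h

variable {A B i} in
lemma spliceX_of_eq {j : ℤ} (h : j = i) : spliceX A B i W j = W := by
  rw [spliceX, if_neg (by omega), if_pos h]

variable {A B i} in
lemma spliceX_of_gt {j : ℤ} (h : i < j) : spliceX A B i W j = B.X j := by
  rw [spliceX, if_neg (by omega), if_neg (by omega)]

lemma spliceX_induction {P : V → Prop} (hA : ∀ j, P (A.X j)) (hW : P W) (hB : ∀ j, P (B.X j))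
    (j : ℤ) : P (spliceX A B i W j) := by
  unfold spliceX
  split_ifs
  exacts [hA j, hW, hB j]

variable (α : A.X i ⟶ W) (β : W ⟶ B.X i)

def spliceD (j : ℤ) : spliceX A B i W j ⟶ spliceX A B i W (j + 1) :=
  if h : j + 1 < i then
    eqToHom (spliceX_of_lt (by omega)) ≫ A.d j (j + 1) ≫ eqToHom (spliceX_of_lt h).symm
  else if h : j + 1 = i then
    eqToHom (spliceX_of_lt (by omega)) ≫ A.d j i ≫ α ≫ eqToHom (spliceX_of_eq h).symm
  else if h : j = i then
    eqToHom (spliceX_of_eq h) ≫ β ≫ B.d i (j + 1) ≫ eqToHom (spliceX_of_gt (by omega)).symm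
  else
    eqToHom (spliceX_of_gt (by omega)) ≫ B.d j (j + 1) ≫ eqToHom (spliceX_of_gt (by omega)).symm

variable {A B i α β}

lemma spliceD_comp_spliceD (hαβ : ∀ k, A.d k i ≫ α ≫ β ≫ B.d i (i + 1) = 0) (j : ℤ) :
    spliceD A B i α β j ≫ spliceD A B i α β (j + 1) = 0 := by
  unfold spliceD
  by_cases h₁ : j + 1 + 1 < i
  · simp [dif_pos h₁, dif_pos (show j + 1 < i by omega)]
  by_cases h₂ : j + 1 + 1 = i
  · subst h₂
    simp
  by_cases h₃ : j + 1 = i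
  · subst h₃
    simp [reassoc_of% (hαβ j)]
  by_cases h₄ : j = i
  · subst h₄
    simp [dif_neg h₁, dif_neg h₂]
  · simp [dif_neg h₁, dif_neg h₂, dif_neg h₃, dif_neg h₄, dif_neg (show ¬ j + 1 < i by omega)]

abbrev splice (hαβ : ∀ k, A.d k i ≫ α ≫ β ≫ B.d i (i + 1) = 0) : CochainComplex V ℤ :=
  CochainComplex.of (spliceX A B i W) (spliceD A B i α β) (spliceD_comp_spliceD hαβ)

variable (hαβ : ∀ k, A.d k i ≫ α ≫ β ≫ B.d i (i + 1) = 0)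

lemma splice_d (j : ℤ) : (splice hαβ).d j (j + 1) = spliceD A B i α β j :=
  CochainComplex.of_d _ _ j

section Lift

variable {X : CochainComplex V ℤ} (p : X ⟶ A) (q : X ⟶ B)
  (hpq : p.f i ≫ α ≫ β ≫ B.d i (i + 1) = X.d i (i + 1) ≫ q.f (i + 1))

def spliceLift : X ⟶ splice hαβ where
  f j :=
    if h : j < i then p.f j ≫ eqToHom (spliceX_of_lt h).symm
    else if h : j = i then eqToHom (congrArg X.X h) ≫ p.f i ≫ α ≫ eqToHom (spliceX_of_eq h).symm
    else q.f j ≫ eqToHom (spliceX_of_gt (by omega)).symm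
  comm' j k hjk := by
    obtain rfl : j + 1 = k := hjk
    rw [splice_d, spliceD]
    by_cases h₁ : j + 1 < i
    · simp [dif_pos h₁, dif_pos (show j < i by omega)]
    by_cases h₂ : j + 1 = i
    · subst h₂
      simp
    by_cases h₃ : j = i
    · subst h₃
      simp [reassoc_of% hpq]
    · simp [dif_neg h₁, dif_neg h₂, dif_neg h₃, dif_neg (show ¬ j < i by omega)]

end Lift

section Desc

variable {Y : CochainComplex V ℤ} (p : A ⟶ Y) (q : B ⟶ Y)
  (hpq : ∀ k, A.d k i ≫ α ≫ β ≫ q.f i = A.d k i ≫ p.f i)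

def spliceDesc : splice hαβ ⟶ Y where
  f j :=
    if h : j < i then eqToHom (spliceX_of_lt h) ≫ p.f j
    else if h : j = i then eqToHom (spliceX_of_eq h) ≫ β ≫ q.f i ≫ eqToHom (congrArg Y.X h).symm
    else eqToHom (spliceX_of_gt (by omega)) ≫ q.f j
  comm' j k hjk := by
    obtain rfl : j + 1 = k := hjk
    rw [splice_d, spliceD]
    by_cases h₁ : j + 1 < i
    · simp [dif_pos h₁, dif_pos (show j < i by omega)]
    by_cases h₂ : j + 1 = i
    · subst h₂
      simp [hpq]
    by_cases h₃ : j = i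
    · subst h₃
      simp
    · simp [dif_neg h₁, dif_neg h₂, dif_neg h₃, dif_neg (show ¬ j < i by omega)]

end Desc

variable {X Y : CochainComplex V ℤ}

lemma spliceLift_f_self (p : X ⟶ A) (q : X ⟶ B)
    (hpq : p.f i ≫ α ≫ β ≫ B.d i (i + 1) = X.d i (i + 1) ≫ q.f (i + 1)) :
    (spliceLift hαβ p q hpq).f i = p.f i ≫ α ≫ eqToHom (spliceX_of_eq rfl).symm := by
  simp [spliceLift]

lemma spliceLift_f_of_gt (p : X ⟶ A) (q : X ⟶ B)
    (hpq : p.f i ≫ α ≫ β ≫ B.d i (i + 1) = X.d i (i + 1) ≫ q.f (i + 1)) {j : ℤ} (h : i < j) :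
    (spliceLift hαβ p q hpq).f j = q.f j ≫ eqToHom (spliceX_of_gt h).symm := by
  simp [spliceLift, dif_neg (show ¬ j < i by omega), dif_neg (show j ≠ i by omega)]

lemma spliceDesc_f_self (p : A ⟶ Y) (q : B ⟶ Y)
    (hpq : ∀ k, A.d k i ≫ α ≫ β ≫ q.f i = A.d k i ≫ p.f i) :
    (spliceDesc hαβ p q hpq).f i = eqToHom (spliceX_of_eq rfl) ≫ β ≫ q.f i := by
  simp [spliceDesc]

lemma spliceDesc_f_of_lt (p : A ⟶ Y) (q : B ⟶ Y)
    (hpq : ∀ k, A.d k i ≫ α ≫ β ≫ q.f i = A.d k i ≫ p.f i) {j : ℤ} (h : j < i) :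
    (spliceDesc hαβ p q hpq).f j = eqToHom (spliceX_of_lt h) ≫ p.f j := by
  simp [spliceDesc, dif_pos h]

lemma spliceDesc_f_of_gt (p : A ⟶ Y) (q : B ⟶ Y)
    (hpq : ∀ k, A.d k i ≫ α ≫ β ≫ q.f i = A.d k i ≫ p.f i) {j : ℤ} (h : i < j) :
    (spliceDesc hαβ p q hpq).f j = eqToHom (spliceX_of_gt h) ≫ q.f j := by
  simp [spliceDesc, dif_neg (show ¬ j < i by omega), dif_neg (show j ≠ i by omega)]

lemma spliceLift_comp_spliceDesc (f : X ⟶ Y) (p : X ⟶ A) (q : X ⟶ B)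
    (hpq : p.f i ≫ α ≫ β ≫ B.d i (i + 1) = X.d i (i + 1) ≫ q.f (i + 1)) (p' : A ⟶ Y) (q' : B ⟶ Y)
    (hpq' : ∀ k, A.d k i ≫ α ≫ β ≫ q'.f i = A.d k i ≫ p'.f i)
    (hp : p ≫ p' = f) (hi : p.f i ≫ α ≫ β ≫ q'.f i = f.f i) (hq : q ≫ q' = f) :
    spliceLift hαβ p q hpq ≫ spliceDesc hαβ p' q' hpq' = f := by
  ext j
  rw [HomologicalComplex.comp_f]
  by_cases h₁ : j < i
  · simp [spliceLift, spliceDesc, dif_pos h₁, ← hp]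
  by_cases h₂ : j = i
  · subst h₂
    simp [spliceLift, spliceDesc, hi]
  · simp [spliceLift, spliceDesc, dif_neg h₁, dif_neg h₂, ← hq]

end Splice

def MapsToRadical {M N : ModuleCat Λᵐᵒᵖ} (φ : M ⟶ N) : Prop :=
  LinearMap.range φ.hom ≤ (Ideal.jacobson (⊥ : Ideal Λᵐᵒᵖ)) • (⊤ : Submodule Λᵐᵒᵖ N)

lemma MapsToRadical.comp_left {M N P : ModuleCat Λᵐᵒᵖ} {ψ : N ⟶ P} (h : MapsToRadical ψ)
    (φ : M ⟶ N) : MapsToRadical (φ ≫ ψ) :=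
  le_trans (by simpa using LinearMap.range_comp_le_range φ.hom ψ.hom) h

lemma MapsToRadical.comp_right {M N P : ModuleCat Λᵐᵒᵖ} {φ : M ⟶ N} (h : MapsToRadical φ)
    (ψ : N ⟶ P) : MapsToRadical (φ ≫ ψ) := by
  rw [MapsToRadical, ModuleCat.hom_comp, LinearMap.range_comp]
  calc Submodule.map ψ.hom (LinearMap.range φ.hom)
      ≤ Submodule.map ψ.hom (Ideal.jacobson (⊥ : Ideal Λᵐᵒᵖ) • ⊤) := Submodule.map_mono h
    _ = Ideal.jacobson (⊥ : Ideal Λᵐᵒᵖ) • Submodule.map ψ.hom ⊤ := Submodule.map_smul'' _ _ _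
    _ ≤ _ := smul_mono_right _ le_top

lemma IsMinimalProjective.mapsToRadical_d {X : Cplx Λ} (hX : IsMinimalProjective X) (j k : ℤ) :
    MapsToRadical (X.d j k) := by
  by_cases h : j + 1 = k
  · subst h
    exact hX.2.2 j
  · simp [X.shape j k h, MapsToRadical]

lemma IsMinimalProjective.splice {A B : Cplx Λ} (hA : IsMinimalProjective A)
    (hB : IsMinimalProjective B) {i : ℤ} {W : ModuleCat Λᵐᵒᵖ} [Module.Finite Λᵐᵒᵖ W]
    [Module.Projective Λᵐᵒᵖ W] {α : A.X i ⟶ W} {β : W ⟶ B.X i}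
    (hαβ : ∀ k, A.d k i ≫ α ≫ β ≫ B.d i (i + 1) = 0) : IsMinimalProjective (splice hαβ) := by
  refine ⟨spliceX_induction (P := fun M => Module.Finite Λᵐᵒᵖ M) A B i hA.1 ‹_› hB.1,
    spliceX_induction (P := fun M => Module.Projective Λᵐᵒᵖ M) A B i hA.2.1 ‹_› hB.2.1,
    fun j => ?_⟩
  rw [splice_d, spliceD]
  split_ifs
  · exact ((hA.mapsToRadical_d _ _).comp_right _).comp_left _
  · exact (((hA.mapsToRadical_d _ _).comp_right _).comp_right _).comp_left _
  · exact (((hB.mapsToRadical_d _ _).comp_right _).comp_left _).comp_left _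
  · exact ((hB.mapsToRadical_d _ _).comp_right _).comp_left _

section Irreducible

variable {X Y : Cplx Λ} {f : X ⟶ Y} (hX : IsMinimalProjective X) (hY : IsMinimalProjective Y)
  (hf : IrreducibleC f)
include hX hY hf

lemma IrreducibleC.isSplitMono_or_isSplitEpi_of_fac {i : ℤ} {W : ModuleCat Λᵐᵒᵖ}
    [Module.Finite Λᵐᵒᵖ W] [Module.Projective Λᵐᵒᵖ W] {α : X.X i ⟶ W} {β : W ⟶ Y.X i}
    (hαβ : α ≫ β = f.f i) :
    (IsSplitMono α ∧ ∀ j, i < j → IsSplitMono (f.f j)) ∨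
      (IsSplitEpi β ∧ ∀ j < i, IsSplitEpi (f.f j)) := by
  have hd : ∀ k, X.d k i ≫ α ≫ β ≫ Y.d i (i + 1) = 0 := by simp [reassoc_of% hαβ]
  let g := spliceLift hd (𝟙 X) f (by simp [reassoc_of% hαβ])
  let h := spliceDesc hd f (𝟙 Y) (by simp [hαβ])
  have hgh : g ≫ h = f := spliceLift_comp_spliceDesc hd f _ _ _ _ _ _
    (Category.id_comp f) (by simp [hαβ]) (Category.comp_id f)
  rcases hf.2.2 _ (hX.splice hY hd) g h hgh.symm with hg | hh
  · refine .inl ⟨?_, fun j hj => ?_⟩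
    · have := isSplitMono_f hg i
      rw [spliceLift_f_self, HomologicalComplex.id_f, Category.id_comp] at this
      exact isSplitMono_of_isSplitMono_comp this
    · have := isSplitMono_f hg j
      rw [spliceLift_f_of_gt _ _ _ _ hj] at this
      exact isSplitMono_of_isSplitMono_comp this
  · refine .inr ⟨?_, fun j hj => ?_⟩
    · have := isSplitEpi_f hh i
      rw [spliceDesc_f_self, HomologicalComplex.id_f, Category.comp_id] at this
      exact isSplitEpi_of_isSplitEpi_comp this
    · have := isSplitEpi_f hh j
      rw [spliceDesc_f_of_lt _ _ _ _ hj] at this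
      exact isSplitEpi_of_isSplitEpi_comp this

lemma IrreducibleC.irreducibleP_f {i : ℤ} (hm : ¬ IsSplitMono (f.f i))
    (he : ¬ IsSplitEpi (f.f i)) : IrreducibleP (f.f i) :=
  ⟨hm, he, fun _ _ _ _ _ hαβ => (hf.isSplitMono_or_isSplitEpi_of_fac hX hY hαβ.symm).imp
    And.left And.left⟩

lemma IrreducibleC.isSplitEpi_or_isSplitMono (i : ℤ) :
    (∀ j ≤ i, IsSplitEpi (f.f j)) ∨ ∀ j, i < j → IsSplitMono (f.f j) := by
  have := hX.1 i
  have := hX.2.1 i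
  rcases hf.isSplitMono_or_isSplitEpi_of_fac hX hY (Category.id_comp (f.f i)) with
    ⟨-, hmono⟩ | ⟨hi, hepi⟩
  · exact .inr hmono
  · refine .inl fun j hj => ?_
    rcases hj.lt_or_eq with hj | rfl
    exacts [hepi j hj, hi]

lemma IrreducibleC.isSplitMono_or_isSplitEpi_of_isSplitEpi {i : ℤ} (he : IsSplitEpi (f.f i))
    [Mono (f.f (i + 1))] : IsSplitMono (f.f i) ∨ ∀ j, i < j → IsSplitEpi (f.f j) := by
  have := hY.1 i
  have := hY.2.1 i
  have hsec : section_ (f.f i) ≫ f.f i = 𝟙 _ := IsSplitEpi.id _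
  have hlift : section_ (f.f i) ≫ X.d i (i + 1) ≫ f.f (i + 1) = Y.d i (i + 1) := by
    rw [← HomologicalComplex.Hom.comm, reassoc_of% hsec]
  have hd : ∀ k, Y.d k i ≫ 𝟙 _ ≫ section_ (f.f i) ≫ X.d i (i + 1) = 0 := fun k => by
    simp [← cancel_mono (f.f (i + 1)), hlift]
  let g := spliceLift hd f (𝟙 X) (by simp [← cancel_mono (f.f (i + 1)), hlift])
  let h := spliceDesc hd (𝟙 Y) f (by simp [hsec])
  have hgh : g ≫ h = f := spliceLift_comp_spliceDesc hd f _ _ _ _ _ _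
    (Category.comp_id f) (by simp [hsec]) (Category.id_comp f)
  rcases hf.2.2 _ (hY.splice hX hd) g h hgh.symm with hg | hh
  · have := isSplitMono_f hg i
    rw [spliceLift_f_self] at this
    exact .inl (isSplitMono_of_isSplitMono_comp this)
  · refine .inr fun j hj => ?_
    have := isSplitEpi_f hh j
    rw [spliceDesc_f_of_gt _ _ _ _ hj] at this
    exact isSplitEpi_of_isSplitEpi_comp this

end Irreducible

section Shapes

variable {X Y : Cplx Λ} {f : X ⟶ Y}

lemma Sirreducible.not_smonic (h : Sirreducible f) : ¬ Smonic f :=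
  fun hm => h.elim fun i hi => hi.1.1 (hm i)

lemma Sirreducible.not_sepic (h : Sirreducible f) : ¬ Sepic f :=
  fun he => h.elim fun i hi => hi.1.2.1 (he i)

lemma Smonic.isIso_of_sepic (hm : Smonic f) (he : Sepic f) : IsIso f := by
  have (j : ℤ) : IsIso (f.f j) := by
    have := hm j
    have := he j
    exact isIso_of_mono_of_isSplitEpi _
  exact HomologicalComplex.Hom.isIso_of_components f

lemma IrreducibleC.sirreducible (hX : IsMinimalProjective X) (hY : IsMinimalProjective Y)
    (hf : IrreducibleC f) (hm : ¬ Smonic f) (he : ¬ Sepic f) : Sirreducible f := by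
  obtain ⟨i, hmi, hei, hbelow, habove⟩ := exists_pivot (hf.isSplitEpi_or_isSplitMono hX hY)
    (fun _ hepi _ => hf.isSplitMono_or_isSplitEpi_of_isSplitEpi hX hY hepi) hm he
  exact ⟨i, hf.irreducibleP_f hX hY hmi hei, hbelow, habove⟩

end Shapes

theorem smonic_sepic_or_sirreducible_of_irreducible
    {Λ : Type} [Ring Λ]
    (X Y : Cplx Λ) (hX : IsMinimalProjective X) (hY : IsMinimalProjective Y)
    (f : X ⟶ Y) (hf : IrreducibleC f) :
    (Smonic f ∧ ¬ Sepic f ∧ ¬ Sirreducible f) ∨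
    (¬ Smonic f ∧ Sepic f ∧ ¬ Sirreducible f) ∨
    (¬ Smonic f ∧ ¬ Sepic f ∧ Sirreducible f) := by
  by_cases hm : Smonic f
  · have he : ¬ Sepic f := fun he => hf.1 (have := hm.isIso_of_sepic he; inferInstance)
    exact .inl ⟨hm, he, fun hs => hs.not_smonic hm⟩
  by_cases he : Sepic f
  · exact .inr (.inl ⟨hm, he, fun hs => hs.not_sepic he⟩)
  · exact .inr (.inr ⟨hm, he, hf.sirreducible hX hY hm he⟩)

end ARShapes
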